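/- arXiv:1310.3110 — 9 statements merged into one kernel-verified Lean document; each statement's English description precedes it below -/
import Mathlib

section
/- Let r ≥ 3 and let T = [m_1, ..., m_r] be an r-tuple of integers with 2 ≤ m_1 ≤ ... ≤ m_r such that Θ(T) > 0, α(T) := 4/Θ(T) is a positive integer, and m_i divides α(T) for all 1 ≤ i ≤ r. Then r ≤ 8. -/
/-- For a tuple `T = [m₁, ..., m_r]`, `Θ(T) := -2 + ∑ᵢ (1 - 1/mᵢ)` as a rational number. -/
def Theta (T : List ℕ) : ℚ :=
  -2 + (T.map (fun m => 1 - (1 : ℚ) / m)).sum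

/-! Every `mᵢ ≥ 2` contributes at least `1/2` to `Θ(T)`, so `r ≤ 2 Θ(T) + 4`. On the other hand
some `mᵢ ≥ 2` divides `α(T)`, so `α(T) ≥ 2` and `Θ(T) = 4 / α(T) ≤ 2`. -/

lemma Theta_cons (m : ℕ) (T : List ℕ) : Theta (m :: T) = Theta T + (1 - 1 / m) := by
  -- inside `Theta`, `T` is coerced to `List ℚ` through the list monad
  simp only [Theta, List.pure_def, List.bind_eq_flatMap, List.flatMap_cons, List.cons_append,
    List.nil_append, List.map_cons, List.sum_cons]
  ring

lemma length_le_two_mul_Theta_add_four {T : List ℕ} (htwo : ∀ m ∈ T, 2 ≤ m) :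
    (T.length : ℚ) ≤ 2 * Theta T + 4 := by
  induction T with
  | nil => norm_num [Theta]
  | cons m T ih =>
    have hm : (2 : ℚ) ≤ m := by exact_mod_cast htwo m List.mem_cons_self
    have hinv : 1 / (m : ℚ) ≤ 1 / 2 := one_div_le_one_div_of_le two_pos hm
    have hT := ih fun k hk => htwo k (List.mem_cons_of_mem m hk)
    rw [Theta_cons, List.length_cons]
    push_cast
    linarith

theorem length_le_eight_of_type_general (T : List ℕ)
    (htwo : ∀ m ∈ T, 2 ≤ m)
    (a : ℕ) (hapos : 0 < a)
    (halpha : (a : ℚ) * Theta T = 4)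
    (hdvd : ∀ m ∈ T, m ∣ a) :
    T.length ≤ 8 := by
  by_cases hT : T = []
  · simp [hT]
  obtain ⟨m, hm⟩ := List.exists_mem_of_ne_nil T hT
  have ha : (2 : ℚ) ≤ a := by exact_mod_cast (htwo m hm).trans (Nat.le_of_dvd hapos (hdvd m hm))
  have hΘ : Theta T ≤ 2 := by nlinarith
  have := length_le_two_mul_Theta_add_four htwo
  exact_mod_cast (by linarith : (T.length : ℚ) ≤ 8)

/-- If `T = [m₁, ..., m_r]` with `r ≥ 3`, `2 ≤ m₁ ≤ ... ≤ m_r`, `Θ(T) > 0`,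
`α(T) = 4/Θ(T)` is a positive integer `a`, and every `mᵢ` divides `a`, then `r ≤ 8`. -/
theorem length_le_eight_of_type (T : List ℕ)
    (hlen : 3 ≤ T.length)
    (hsort : T.Pairwise (· ≤ ·))
    (htwo : ∀ m ∈ T, 2 ≤ m)
    (hpos : 0 < Theta T)
    (a : ℕ) (hapos : 0 < a)
    (halpha : (a : ℚ) * Theta T = 4)
    (hdvd : ∀ m ∈ T, m ∣ a) :
    T.length ≤ 8 :=
  length_le_eight_of_type_general T htwo a hapos halpha hdvd
end

section
/- Let T = [m_1, m_2, m_3] be a triple of integers with 2 ≤ m_1 ≤ m_2 ≤ m_3 such that Θ(T) > 0, α(T) := 4/Θ(T) is a positive integer, and m_i divides α(T) for i = 1, 2, 3. Then m_3 ≤ 30. -/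
lemma Theta_triple (m₁ m₂ m₃ : ℕ) :
    Theta [m₁, m₂, m₃] = 1 - (1 / (m₁ : ℚ) + 1 / m₂ + 1 / m₃) := by
  change -2 + ((1 - 1 / (m₁ : ℚ)) + ((1 - 1 / (m₂ : ℚ)) + ((1 - 1 / (m₃ : ℚ)) + 0))) = _
  ring

lemma one_div_add_one_div_le_five_sixths {m₁ m₂ : ℕ} (h₁ : 0 < m₁) (h₂ : 0 < m₂)
    (h : (1 / m₁ + 1 / m₂ : ℚ) < 1) : (1 / m₁ + 1 / m₂ : ℚ) ≤ 5 / 6 := by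
  have hle : ∀ {m k : ℕ}, 0 < k → k ≤ m → (1 / m : ℚ) ≤ 1 / k := fun hk hkm =>
    one_div_le_one_div_of_le (by exact_mod_cast hk) (by exact_mod_cast hkm)
  have hpos₁ : (0 : ℚ) < 1 / m₁ := by positivity
  have hpos₂ : (0 : ℚ) < 1 / m₂ := by positivity
  obtain rfl | rfl | ⟨rfl, rfl⟩ | ⟨h₁, h₂⟩ | ⟨h₁, h₂⟩ :
      m₁ = 1 ∨ m₂ = 1 ∨ (m₁ = 2 ∧ m₂ = 2) ∨ (3 ≤ m₁ ∧ 2 ≤ m₂) ∨ (2 ≤ m₁ ∧ 3 ≤ m₂) := by omega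
  · norm_num at h; linarith
  · norm_num at h; linarith
  · norm_num at h
  · linarith [hle (by norm_num) h₁, hle (by norm_num) h₂]
  · linarith [hle (by norm_num) h₁, hle (by norm_num) h₂]

lemma le_thirty_of_four_div_add_eq_one {m₁ m₂ m₃ a : ℕ} (h₁ : 0 < m₁) (h₂ : 0 < m₂)
    (ha : 0 < a) (hdvd : m₃ ∣ a) (h : (4 / a + (1 / m₁ + 1 / m₂ + 1 / m₃) : ℚ) = 1) :
    m₃ ≤ 30 := by
  have hm₃ : (0 : ℚ) < m₃ := by exact_mod_cast Nat.pos_of_dvd_of_pos hdvd ha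
  have hm₃a : (m₃ : ℚ) ≤ a := by exact_mod_cast Nat.le_of_dvd ha hdvd
  have hlt : (1 / m₁ + 1 / m₂ : ℚ) < 1 := by
    have : (0 : ℚ) < 4 / a + 1 / m₃ := by positivity
    linarith
  have h4 : (4 / a : ℚ) ≤ 4 / m₃ := div_le_div_of_nonneg_left (by norm_num) hm₃ hm₃a
  have h6 : (1 / 6 : ℚ) ≤ 5 / m₃ := by
    have : (5 / m₃ : ℚ) = 4 / m₃ + 1 / m₃ := by ring
    linarith [one_div_add_one_div_le_five_sixths h₁ h₂ hlt]
  rw [div_le_div_iff₀ (by norm_num) hm₃] at h6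
  exact_mod_cast (by linarith : (m₃ : ℚ) ≤ 30)

theorem last_le_thirty_of_type_general (m₁ m₂ m₃ : ℕ)
    (h₁ : 2 ≤ m₁) (h₁₂ : m₁ ≤ m₂)
    (a : ℕ)
    (halpha : (a : ℚ) * Theta [m₁, m₂, m₃] = 4)
    (hdvd₃ : m₃ ∣ a) :
    m₃ ≤ 30 := by
  have ha : 0 < a := Nat.pos_of_ne_zero (by rintro rfl; simp at halpha)
  have hsum : (4 / a + (1 / m₁ + 1 / m₂ + 1 / m₃) : ℚ) = 1 := by
    have haq : (a : ℚ) ≠ 0 := by exact_mod_cast ha.ne'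
    rw [Theta_triple] at halpha
    rw [div_add' _ _ _ haq, div_eq_one_iff_eq haq]
    linarith
  exact le_thirty_of_four_div_add_eq_one (by omega) (by omega) ha hdvd₃ hsum

/-- If `T = [m₁, m₂, m₃]` with `2 ≤ m₁ ≤ m₂ ≤ m₃`, `Θ(T) > 0`, `α(T) = 4/Θ(T)` is a
positive integer `a`, and each `mᵢ` divides `a`, then `m₃ ≤ 30`. -/
theorem last_le_thirty_of_type (m₁ m₂ m₃ : ℕ)
    (h₁ : 2 ≤ m₁) (h₁₂ : m₁ ≤ m₂) (h₂₃ : m₂ ≤ m₃)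
    (hpos : 0 < Theta [m₁, m₂, m₃])
    (a : ℕ) (hapos : 0 < a)
    (halpha : (a : ℚ) * Theta [m₁, m₂, m₃] = 4)
    (hdvd₁ : m₁ ∣ a) (hdvd₂ : m₂ ∣ a) (hdvd₃ : m₃ ∣ a) :
    m₃ ≤ 30 :=
  last_le_thirty_of_type_general m₁ m₂ m₃ h₁ h₁₂ a halpha hdvd₃
end

section
/- A tuple T = [m_1, ..., m_r] of integers is a type (i.e. satisfies r ≥ 3, 2 ≤ m_1 ≤ ... ≤ m_r, Θ(T) > 0, α(T) := 4/Θ(T) ∈ ℕ, and m_i ∣ α(T) for all i) if and only if T is one of the following 53 tuples: [2,3,7], [2,3,8], [2,4,5], [2,3,9], [2,3,10], [2,3,12], [2,4,6], [3,3,4], [2,3,14], [2,5,5], [2,3,18], [2,4,8], [2,3,30], [2,5,6], [3,3,5], [2,4,12], [2,6,6], [3,4,4], [3,3,6], [2,2,2,3], [3,3,7], [2,4,20], [2,5,10], [2,6,9], [3,3,9], [2,8,8], [4,4,4], [2,2,2,4], [3,5,5], [3,3,15], [2,7,14], [2,12,12], [3,4,12], [3,6,6], [4,4,6], [2,2,2,6],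 [2,2,3,3], [5,5,5], [2,2,2,10], [3,9,9], [4,8,8], [2,2,4,4], [2,2,2,2,2], [7,7,7], [2,2,6,6], [2,3,3,6], [3,3,3,3], [2,2,2,2,3], [4,4,4,4], [2,2,2,4,4], [2,2,2,2,2,2], [3,3,3,3,3], [2,2,2,2,2,2,2,2]. -/
/-- `T` is a type: `T = [m₁, ..., m_r]` with `r ≥ 3`, `2 ≤ m₁ ≤ ... ≤ m_r`, `Θ(T) > 0`,
`α(T) = 4/Θ(T)` a positive integer, and `mᵢ ∣ α(T)` for all `i`. -/
def IsType (T : List ℕ) : Prop :=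
  3 ≤ T.length ∧ T.Pairwise (· ≤ ·) ∧ (∀ m ∈ T, 2 ≤ m) ∧ 0 < Theta T ∧
    ∃ a : ℕ, 0 < a ∧ (a : ℚ) * Theta T = 4 ∧ ∀ m ∈ T, m ∣ a

/-!
Let `α = α(T)`. Every `mᵢ` divides `α`, so `mᵢ ≤ α` and `mᵢ · Θ(T) ≤ α · Θ(T) = 4`. For a
nondecreasing `T = P ++ m :: S` the entries of `m :: S` are `≥ m`, hence
`m · (Θ(T) + ∑_{x ∈ m :: S} 1/x) ≤ 4 + |m :: S|`, and the factor
`Θ(T) + ∑_{x ∈ m :: S} 1/x = -2 + ∑_{p ∈ P} (1 - 1/p) + |m :: S|` only depends on the entries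
before `m`. So every entry is bounded in terms of the earlier ones; for the first entry the bound
reads `2 (r - 2) ≤ r + 4`, i.e. `r ≤ 8`, and the finitely many tuples of each length `3 ≤ r ≤ 8`
obeying these bounds are checked by evaluation.
-/

def recipSum (T : List ℕ) : ℚ :=
  (T.map fun m : ℕ => (1 : ℚ) / m).sum

@[simp] theorem recipSum_nil : recipSum [] = 0 := rfl

@[simp] theorem recipSum_cons (m : ℕ) (T : List ℕ) : recipSum (m :: T) = 1 / m + recipSum T := by
  simp [recipSum]

theorem recipSum_nonneg (T : List ℕ) : 0 ≤ recipSum T :=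
  List.sum_nonneg fun _ hx => by
    obtain ⟨m, -, rfl⟩ := List.mem_map.1 hx
    exact one_div_nonneg.2 (Nat.cast_nonneg m)

theorem mul_recipSum_le {m : ℕ} : ∀ {T : List ℕ}, (∀ x ∈ T, m ≤ x) → m * recipSum T ≤ T.length
  | [], _ => by simp
  | x :: T, h => by
    have hx : (m : ℚ) * (1 / x) ≤ 1 := by
      rw [mul_one_div]
      exact div_le_one_of_le₀ (by exact_mod_cast h x List.mem_cons_self) (by positivity)
    have ih := mul_recipSum_le fun y hy => h y (List.mem_cons_of_mem x hy)
    simp only [recipSum_cons, List.length_cons, Nat.cast_succ]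
    linarith [mul_add (m : ℚ) (1 / x) (recipSum T)]

theorem theta_add_recipSum (T : List ℕ) : Theta T + recipSum T = T.length - 2 := by
  induction T with
  | nil => simp [Theta]
  | cons m T ih =>
    simp [Theta, recipSum] at ih ⊢
    linarith

theorem floor_div_eq_of_natCast_mul_eq {K : Type*} [Field K] [LinearOrder K] [IsStrictOrderedRing K]
    [FloorSemiring K] {a : ℕ} {θ c : K} (hθ : θ ≠ 0) (h : (a : K) * θ = c) : ⌊c / θ⌋₊ = a := by
  rw [← h, mul_div_cancel_right₀ _ hθ, Nat.floor_natCast]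

theorem isType_iff_floor (T : List ℕ) : IsType T ↔
    3 ≤ T.length ∧ T.Pairwise (· ≤ ·) ∧ (∀ m ∈ T, 2 ≤ m) ∧ 0 < Theta T ∧
      0 < ⌊4 / Theta T⌋₊ ∧ (⌊4 / Theta T⌋₊ : ℚ) * Theta T = 4 ∧ ∀ m ∈ T, m ∣ ⌊4 / Theta T⌋₊ := by
  refine and_congr_right fun _ => and_congr_right fun _ => and_congr_right fun _ =>
    and_congr_right fun hΘ => ⟨?_, fun h => ⟨_, h⟩⟩
  rintro ⟨a, h⟩
  rwa [floor_div_eq_of_natCast_mul_eq hΘ.ne' h.2.1]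

instance : DecidablePred IsType := fun T => decidable_of_iff _ (isType_iff_floor T).symm

theorem IsType.mul_theta_le {T : List ℕ} (hT : IsType T) {m : ℕ} (hm : m ∈ T) :
    m * Theta T ≤ 4 := by
  obtain ⟨-, -, -, hΘ, a, ha, hα, hdvd⟩ := hT
  have hma : (m : ℚ) ≤ a := by exact_mod_cast Nat.le_of_dvd ha (hdvd m hm)
  rw [← hα]
  exact mul_le_mul_of_nonneg_right hma hΘ.le

theorem head_mul_le {θ : ℚ} {m : ℕ} {S : List ℕ} (hS : ∀ x ∈ S, m ≤ x) (hm : m * θ ≤ 4) :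
    m * (θ + recipSum (m :: S)) ≤ S.length + 5 := by
  have := mul_recipSum_le (T := m :: S) (m := m) (by simpa using hS)
  simp only [List.length_cons, Nat.cast_succ] at this
  linarith [mul_add (m : ℚ) θ (recipSum (m :: S))]

/-- Nondecreasing lists of length `j` with entries `≥ lo` in which every entry `m` satisfies
`m · c ≤ 4 + #(entries from m on)`, where `c` stands for `Θ(T) + ∑ 1/x` over the entries from `m`
on: it starts at `r - 2` and drops by `1/m` after each entry `m`. -/
def candidates : ℕ → ℕ → ℚ → List (List ℕ)
  | 0, _, _ => [[]]
  | j + 1, lo, c =>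
    (List.Ico lo (⌊(j + 5 : ℚ) / c⌋₊ + 1)).flatMap fun m =>
      (candidates j m (c - 1 / m)).map (m :: ·)

theorem mem_candidates_of_pairwise {θ : ℚ} (hθ : 0 < θ) :
    ∀ {L : List ℕ} {lo : ℕ}, L.Pairwise (· ≤ ·) → (∀ x ∈ L, lo ≤ x) → (∀ x ∈ L, x * θ ≤ 4) →
      L ∈ candidates L.length lo (θ + recipSum L)
  | [], _, _, _, _ => List.mem_singleton_self _
  | m :: S, lo, hsort, hlo, hθL => by
    rw [List.pairwise_cons] at hsort
    have hc : 0 < θ + recipSum (m :: S) := add_pos_of_pos_of_nonneg hθ (recipSum_nonneg _)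
    have hbound := head_mul_le hsort.1 (hθL m List.mem_cons_self)
    have ih := mem_candidates_of_pairwise hθ hsort.2 hsort.1 fun x hx =>
      hθL x (List.mem_cons_of_mem m hx)
    refine List.mem_flatMap.2 ⟨m, List.Ico.mem.2 ⟨hlo m List.mem_cons_self, ?_⟩, ?_⟩
    · rw [Nat.lt_succ_iff, Nat.le_floor_iff (by positivity), le_div_iff₀ hc]
      exact_mod_cast hbound
    · refine List.mem_map.2 ⟨S, ?_, rfl⟩
      convert ih using 2
      simp only [recipSum_cons]
      ring

theorem IsType.mem_candidates {T : List ℕ} (hT : IsType T) :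
    T ∈ candidates T.length 2 (T.length - 2) := by
  rw [← theta_add_recipSum]
  exact mem_candidates_of_pairwise hT.2.2.2.1 hT.2.1 hT.2.2.1 fun _ => hT.mul_theta_le

theorem IsType.length_le_eight {T : List ℕ} (hT : IsType T) : T.length ≤ 8 := by
  obtain ⟨m, S, rfl⟩ := List.exists_cons_of_length_pos (by linarith [hT.1] : 0 < T.length)
  have hm : (2 : ℚ) ≤ m := by exact_mod_cast hT.2.2.1 m List.mem_cons_self
  have hS : (2 : ℚ) ≤ S.length := by exact_mod_cast Nat.le_of_succ_le_succ hT.1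
  have hbound := head_mul_le (List.pairwise_cons.1 hT.2.1).1 (hT.mul_theta_le List.mem_cons_self)
  rw [theta_add_recipSum, List.length_cons, Nat.cast_succ] at hbound
  have hS7 : (S.length : ℚ) ≤ 7 := by
    nlinarith [mul_nonneg (sub_nonneg.2 hm) (by linarith : (0 : ℚ) ≤ S.length - 1)]
  rw [List.length_cons]
  exact Nat.succ_le_succ (by exact_mod_cast hS7)

/-- The classification of types: `T` is a type if and only if `T` is one of the
following 53 tuples. -/
theorem isType_iff_mem_list (T : List ℕ) :
    IsType T ↔ T ∈ [
      [2,3,7], [2,3,8], [2,4,5], [2,3,9], [2,3,10],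
      [2,3,12], [2,4,6], [3,3,4], [2,3,14], [2,5,5],
      [2,3,18], [2,4,8], [2,3,30], [2,5,6], [3,3,5],
      [2,4,12], [2,6,6], [3,4,4], [3,3,6], [2,2,2,3],
      [3,3,7], [2,4,20], [2,5,10], [2,6,9], [3,3,9],
      [2,8,8], [4,4,4], [2,2,2,4], [3,5,5], [3,3,15],
      [2,7,14], [2,12,12], [3,4,12], [3,6,6], [4,4,6],
      [2,2,2,6], [2,2,3,3], [5,5,5], [2,2,2,10], [3,9,9],
      [4,8,8], [2,2,4,4], [2,2,2,2,2], [7,7,7], [2,2,6,6],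
      [2,3,3,6], [3,3,3,3], [2,2,2,2,3], [4,4,4,4], [2,2,2,4,4],
      [2,2,2,2,2,2], [3,3,3,3,3], [2,2,2,2,2,2,2,2] ] := by
  refine ⟨fun hT => ?_, ?_⟩
  · have h3 : 3 ≤ T.length := hT.1
    have h8 := hT.length_le_eight
    have hmem := hT.mem_candidates
    generalize T.length = r at h3 h8 hmem
    revert hT
    revert hmem
    revert T
    interval_cases r <;> decide +kernel
  · revert T
    decide +kernel
end

section
/- For any two types T_1 and T_2, one has α(T_1) · α(T_2) ≤ 28224; in particular, (1/2)·α(T_1)·α(T_2) ≤ 14112. -/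
lemma inv_natCast_le {k m : ℕ} (hk : 0 < k) (h : k ≤ m) : (m : ℚ)⁻¹ ≤ (k : ℚ)⁻¹ :=
  inv_anti₀ (by exact_mod_cast hk) (by exact_mod_cast h)

namespace Theta

lemma eq_sum (T : List ℕ) : Theta T = -2 + (T.map fun m : ℕ => 1 - (m : ℚ)⁻¹).sum := by
  simp [Theta, ← List.map_eq_flatMap, Function.comp_def]

@[simp]
lemma nil : Theta [] = -2 := by
  simp [eq_sum]

@[simp]
lemma cons (m : ℕ) (T : List ℕ) : Theta (m :: T) = Theta T + (1 - (m : ℚ)⁻¹) := by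
  simp only [eq_sum, List.map_cons, List.sum_cons]
  ring

lemma perm_eq {T T' : List ℕ} (h : T.Perm T') : Theta T = Theta T' := by
  simp only [eq_sum, (h.map _).sum_eq]

lemma length_div_two_sub_two_le {T : List ℕ} (hT : ∀ m ∈ T, 2 ≤ m) :
    (T.length : ℚ) / 2 - 2 ≤ Theta T := by
  induction T with
  | nil => simp
  | cons m T ih =>
    simp only [List.mem_cons, forall_eq_or_imp] at hT
    have : (m : ℚ)⁻¹ ≤ 2⁻¹ := inv_natCast_le two_pos hT.1
    simp only [cons, List.length_cons, Nat.cast_succ]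
    linarith [ih hT.2]

lemma one_div_42_le_triple {a b c : ℕ} (ha : 2 ≤ a) (hab : a ≤ b) (hbc : b ≤ c)
    (hpos : 0 < Theta [a, b, c]) : 1 / 42 ≤ Theta [a, b, c] := by
  simp only [cons, nil] at hpos ⊢
  rcases le_or_gt c 6 with hc | hc
  · revert hpos
    interval_cases c <;> interval_cases b <;> interval_cases a <;> norm_num
  have : (c : ℚ)⁻¹ ≤ 7⁻¹ := inv_natCast_le (by norm_num) hc
  rcases le_or_gt b 3 with hb | hb
  · have : 0 ≤ (c : ℚ)⁻¹ := by positivity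
    interval_cases b <;> interval_cases a <;> linarith
  · have : (a : ℚ)⁻¹ ≤ 2⁻¹ := inv_natCast_le two_pos ha
    have : (b : ℚ)⁻¹ ≤ 4⁻¹ := inv_natCast_le (by norm_num) hb
    linarith

lemma one_div_six_le_quadruple {a b c d : ℕ} (ha : 2 ≤ a) (hab : a ≤ b) (hbc : b ≤ c) (hcd : c ≤ d)
    (hpos : 0 < Theta [a, b, c, d]) : 1 / 6 ≤ Theta [a, b, c, d] := by
  simp only [cons, nil] at hpos ⊢
  rcases le_or_gt d 2 with hd | hd
  · obtain ⟨rfl, rfl, rfl, rfl⟩ : a = 2 ∧ b = 2 ∧ c = 2 ∧ d = 2 := by omega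
    norm_num at hpos
  · have : (a : ℚ)⁻¹ ≤ 2⁻¹ := inv_natCast_le two_pos ha
    have : (b : ℚ)⁻¹ ≤ 2⁻¹ := inv_natCast_le two_pos (ha.trans hab)
    have : (c : ℚ)⁻¹ ≤ 2⁻¹ := inv_natCast_le two_pos (ha.trans (hab.trans hbc))
    have : (d : ℚ)⁻¹ ≤ 3⁻¹ := inv_natCast_le (by norm_num) hd
    linarith

lemma le_length_sub_two (T : List ℕ) : Theta T ≤ T.length - 2 := by
  induction T with
  | nil => simp
  | cons m T ih =>
    have : 0 ≤ (m : ℚ)⁻¹ := by positivity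
    simp only [cons, List.length_cons, Nat.cast_succ]
    linarith

lemma one_div_42_le_of_sorted {T : List ℕ} (hs : T.Pairwise (· ≤ ·)) (hT : ∀ m ∈ T, 2 ≤ m)
    (hpos : 0 < Theta T) : 1 / 42 ≤ Theta T := by
  have hlen : 3 ≤ T.length := by
    have : (2 : ℚ) < T.length := by linarith [le_length_sub_two T]
    exact_mod_cast this
  rcases T with _ | ⟨a, _ | ⟨b, _ | ⟨c, _ | ⟨d, _ | ⟨e, T⟩⟩⟩⟩⟩ <;>
    simp only [List.length_cons, List.length_nil] at hlen <;> try omega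
  · simp only [List.pairwise_cons] at hs
    exact one_div_42_le_triple (hT a (by simp)) (hs.1 b (by simp)) (hs.2.1 c (by simp)) hpos
  · simp only [List.pairwise_cons] at hs
    calc (1 : ℚ) / 42 ≤ 1 / 6 := by norm_num
      _ ≤ Theta [a, b, c, d] := one_div_six_le_quadruple (hT a (by simp)) (hs.1 b (by simp))
        (hs.2.1 c (by simp)) (hs.2.2.1 d (by simp)) hpos
  · have h := length_div_two_sub_two_le hT
    simp only [List.length_cons, Nat.cast_add, Nat.cast_one] at h
    linarith [(T.length.cast_nonneg : (0 : ℚ) ≤ T.length)]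

theorem one_div_42_le {T : List ℕ} (hT : ∀ m ∈ T, 2 ≤ m) (hpos : 0 < Theta T) :
    1 / 42 ≤ Theta T := by
  have hperm := T.mergeSort_perm (fun a b => decide (a ≤ b))
  rw [← perm_eq hperm] at hpos ⊢
  exact one_div_42_le_of_sorted (List.pairwise_mergeSort' (· ≤ ·) T)
    (fun m hm => hT m (hperm.subset hm)) hpos

end Theta

theorem alpha_le_168 {T : List ℕ} (hT : ∀ m ∈ T, 2 ≤ m) {a : ℕ} (ha : (a : ℚ) * Theta T = 4) :
    a ≤ 168 := by
  have hpos : 0 < Theta T := pos_of_mul_pos_right (ha ▸ four_pos) a.cast_nonneg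
  have h42 := Theta.one_div_42_le hT hpos
  have : (a : ℚ) ≤ 168 := by nlinarith
  exact_mod_cast this

/-- For any two types `T₁`, `T₂` with `α`-values `a₁`, `a₂` (so `aᵢ · Θ(Tᵢ) = 4`,
i.e. `aᵢ = 4/Θ(Tᵢ)`), one has `a₁ · a₂ ≤ 28224`; in particular `(a₁ · a₂)/2 ≤ 14112`. -/
theorem alpha_mul_alpha_le_28224 (T₁ T₂ : List ℕ) (hT₁ : IsType T₁) (hT₂ : IsType T₂)
    (a₁ a₂ : ℕ) (ha₁ : (a₁ : ℚ) * Theta T₁ = 4) (ha₂ : (a₂ : ℚ) * Theta T₂ = 4) :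
    a₁ * a₂ ≤ 28224 ∧ (a₁ * a₂ : ℚ) / 2 ≤ 14112 := by
  have hmul : a₁ * a₂ ≤ 168 * 168 :=
    Nat.mul_le_mul (alpha_le_168 hT₁.2.2.1 ha₁) (alpha_le_168 hT₂.2.2.1 ha₂)
  have hmulℚ : (a₁ * a₂ : ℚ) ≤ 168 * 168 := by exact_mod_cast hmul
  exact ⟨hmul, by linarith⟩
end

section
/- No group of order 768 is a quotient of the polygonal group T(4,4,4); that is, there is no group G with |G| = 768 generated by two elements x, y satisfying x⁴ = y⁴ = (x·y)⁴ = 1. -/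
/-!
A Sylow 2-subgroup of a group of order 768 = 2⁸·3 has index 3, so the action on its cosets
gives a quotient `Q` whose order is divisible by 3 and divides 3! = 6. Since 4 does not divide
`|Q|`, the images of `x`, `y`, `xy` are involutions, so `Q` is generated by two commuting
involutions and has exponent 2, contradicting Cauchy's theorem at the prime 3.
-/

theorem Subgroup.index_normalCore_dvd_factorial {G : Type*} [Group G] (H : Subgroup G)
    [H.FiniteIndex] : H.normalCore.index ∣ H.index.factorial := by
  rw [normalCore_eq_ker, index_ker, index_eq_card, ← Nat.card_perm]
  exact card_subgroup_dvd_card (MulAction.toPermHom G (G ⧸ H)).range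

theorem Sylow.index_eq_of_card_eq {G : Type*} [Group G] [Finite G] {p n m : ℕ} [Fact p.Prime]
    (hG : Nat.card G = p ^ n * m) (hm : ¬ p ∣ m) (P : Sylow p G) :
    (P : Subgroup G).index = m := by
  have hp : p.Prime := Fact.out
  have hm0 : m ≠ 0 := by rintro rfl; exact hm (dvd_zero p)
  have hP : Nat.card P = p ^ n := by
    rw [P.card_eq_multiplicity, hG, Nat.factorization_mul (pow_ne_zero _ hp.ne_zero) hm0]
    simp [Nat.factorization_eq_zero_of_not_dvd hm, hp.factorization_self]
  have hmul := (P : Subgroup G).card_mul_index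
  rw [hP, hG] at hmul
  exact Nat.eq_of_mul_eq_mul_left (pow_pos hp.pos n) hmul

theorem pow_two_eq_one_of_pow_four_eq_one {Q : Type*} [Group Q] (hQ : ¬ 4 ∣ Nat.card Q) {g : Q}
    (hg : g ^ 4 = 1) : g ^ 2 = 1 := by
  obtain ⟨k, hk, hgk⟩ := (Nat.dvd_prime_pow Nat.prime_two).mp
    (show orderOf g ∣ 2 ^ 2 from orderOf_dvd_of_pow_eq_one hg)
  have hk2 : k ≠ 2 := by rintro rfl; exact hQ (by simpa [hgk] using orderOf_dvd_natCard g)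
  rw [← orderOf_dvd_iff_pow_eq_one, hgk]
  simpa using pow_dvd_pow 2 (show k ≤ 1 by omega)

theorem Subgroup.pow_two_eq_one_of_mem_closure {Q : Type*} [Group Q] {s : Set Q}
    (hcomm : ∀ x ∈ s, ∀ y ∈ s, x * y = y * x) (hs : ∀ x ∈ s, x ^ 2 = 1) {g : Q}
    (hg : g ∈ closure s) : g ^ 2 = 1 := by
  have := isMulCommutative_closure hcomm
  induction hg using closure_induction with
  | mem x hx => exact hs x hx
  | one => exact one_pow 2
  | mul a b ha hb iha ihb =>
    rw [(show Commute a b from setLike_mul_comm ha hb).mul_pow, iha, ihb, one_mul]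
  | inv a _ iha => rw [inv_pow, iha, inv_one]

theorem pow_two_eq_one_of_mem_closure_pair {Q : Type*} [Group Q] {x y : Q} (hx : x ^ 2 = 1)
    (hy : y ^ 2 = 1) (hxy : (x * y) ^ 2 = 1) {g : Q} (hg : g ∈ Subgroup.closure {x, y}) :
    g ^ 2 = 1 := by
  have inv_eq_self {a : Q} (ha : a ^ 2 = 1) : a⁻¹ = a := inv_eq_of_mul_eq_one_right (sq a ▸ ha)
  have hcomm : x * y = y * x := by
    rw [← inv_eq_self hxy, mul_inv_rev, inv_eq_self hx, inv_eq_self hy]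
  refine Subgroup.pow_two_eq_one_of_mem_closure ?_ ?_ hg
  · simp only [Set.mem_insert_iff, Set.mem_singleton_iff]
    rintro a (rfl | rfl) b (rfl | rfl) <;> first | rfl | exact hcomm | exact hcomm.symm
  · simp only [Set.mem_insert_iff, Set.mem_singleton_iff]
    rintro a (rfl | rfl) <;> assumption

theorem pow_two_eq_one_of_surjective {G Q : Type*} [Group G] [Group Q] {f : G →* Q}
    (hf : Function.Surjective f) (hQ : ¬ 4 ∣ Nat.card Q) {x y : G}
    (hgen : Subgroup.closure {x, y} = ⊤) (hx : x ^ 4 = 1) (hy : y ^ 4 = 1)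
    (hxy : (x * y) ^ 4 = 1) (q : Q) : q ^ 2 = 1 := by
  have image_sq {a : G} (ha : a ^ 4 = 1) : f a ^ 2 = 1 :=
    pow_two_eq_one_of_pow_four_eq_one hQ (by rw [← map_pow, ha, map_one])
  refine pow_two_eq_one_of_mem_closure_pair (image_sq hx) (image_sq hy)
    (map_mul f x y ▸ image_sq hxy) ?_
  rw [← Set.image_pair, ← MonoidHom.map_closure, hgen, Subgroup.map_top_of_surjective f hf]
  trivial

/-- No group of order 768 is a quotient of the polygonal group `T(4,4,4)`; that is,
no group of order 768 is generated by two elements `x, y` with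
`x⁴ = y⁴ = (x·y)⁴ = 1`. -/
theorem no_group_of_order_768_quotient_of_T444
    (G : Type*) [Group G] [Fintype G] (hcard : Fintype.card G = 768) :
    ¬ ∃ x y : G, Subgroup.closure {x, y} = ⊤ ∧
      x ^ 4 = 1 ∧ y ^ 4 = 1 ∧ (x * y) ^ 4 = 1 := by
  rintro ⟨x, y, hgen, hx, hy, hxy⟩
  obtain ⟨S⟩ : Nonempty (Sylow 2 G) := inferInstance
  have hS : (S : Subgroup G).index = 3 :=
    S.index_eq_of_card_eq (n := 8) (by rw [Nat.card_eq_fintype_card, hcard]; rfl) (by norm_num)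
  set N := (S : Subgroup G).normalCore
  have hN6 : N.index ∣ Nat.factorial 3 := hS ▸ (S : Subgroup G).index_normalCore_dvd_factorial
  have hN3 : 3 ∣ N.index := hS ▸ Subgroup.index_dvd_of_le (Subgroup.normalCore_le _)
  obtain ⟨g, hg⟩ := exists_prime_orderOf_dvd_card' (G := G ⧸ N) 3 hN3
  have hg2 : g ^ 2 = 1 := pow_two_eq_one_of_surjective (QuotientGroup.mk'_surjective N)
    (fun h4 => absurd (h4.trans hN6) (by decide)) hgen hx hy hxy g
  exact absurd (hg ▸ orderOf_dvd_of_pow_eq_one hg2) (by decide)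
end

section
/- In the projective special linear group PSL(2, F_7) (the quotient of SL(2, ℤ/7ℤ) by its center), any two elements of order 2 are conjugate; that is, PSL(2, F_7) has exactly one conjugacy class of elements of order 2. -/
/-!
An involution of `PSL(2, F)` lifts to `A ∈ SL(2, F)` with `A² = ±1`, and `A² = 1` would make `A`
scalar by Cayley–Hamilton (`A² = tr A • A - 1`, with `2 ≠ 0`); so `A² = -1`. For a row vector `r`,
the matrix with rows `r` and `-rA` intertwines `A` with the quarter turn `J = !![0, -1; 1, 0]`, and
its determinant is nonzero for a suitable `r`. Multiplying on the left by `x + yJ`, which commutes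
with `J`, scales the determinant by `x² + y²`; in a finite field of odd order this takes every
value, so the intertwiner can be chosen in `SL(2, F)` and every involution is conjugate to `J`.
-/

/-- `PSL(2, 𝔽₇)`: the quotient of `SL(2, ℤ/7ℤ)` by its center. -/
abbrev PSL27 :=
  Matrix.SpecialLinearGroup (Fin 2) (ZMod 7) ⧸
    Subgroup.center (Matrix.SpecialLinearGroup (Fin 2) (ZMod 7))

open Matrix Polynomial
open scoped MatrixGroups

theorem FiniteField.exists_sq_add_sq {F : Type*} [Field F] [Fintype F] (hF : ringChar F ≠ 2)
    (x : F) : ∃ a b : F, a ^ 2 + b ^ 2 = x := by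
  obtain ⟨a, b, hab⟩ := FiniteField.exists_root_sum_quadratic (f := X ^ 2) (g := X ^ 2 - C x)
    (degree_X_pow 2) (degree_X_pow_sub_C two_pos x) (FiniteField.odd_card_of_char_ne_two hF)
  refine ⟨a, b, ?_⟩
  simp only [eval_pow, eval_X, eval_sub, eval_C] at hab
  linear_combination hab

namespace Matrix

variable {R : Type*} [CommRing R]

theorem mul_self_fin_two (A : Matrix (Fin 2) (Fin 2) R) :
    A * A = A.trace • A - A.det • 1 := by
  ext i j
  fin_cases i <;> fin_cases j <;> simp [mul_apply, trace_fin_two, det_fin_two] <;> ring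

def quarterTurn (R : Type*) [CommRing R] : Matrix (Fin 2) (Fin 2) R := !![0, -1; 1, 0]

theorem det_smul_one_add_smul_quarterTurn (x y : R) :
    (x • 1 + y • quarterTurn R).det = x ^ 2 + y ^ 2 := by
  simp [quarterTurn, det_fin_two, sq]

def intertwiner (A : Matrix (Fin 2) (Fin 2) R) (r : Fin 2 → R) : Matrix (Fin 2) (Fin 2) R :=
  ![r, -(r ᵥ* A)]

theorem intertwiner_mul {A : Matrix (Fin 2) (Fin 2) R} (hA : A * A = -1) (r : Fin 2 → R) :
    intertwiner A r * A = quarterTurn R * intertwiner A r := by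
  have hrAA : r ᵥ* A ᵥ* A = -r := by rw [vecMul_vecMul, hA, vecMul_neg, vecMul_one]
  funext i
  rw [mul_apply_eq_vecMul, mul_apply_eq_vecMul, vecMul_eq_sum (quarterTurn R i)]
  fin_cases i <;> simp [intertwiner, quarterTurn, neg_vecMul, hrAA]

theorem det_intertwiner (A : Matrix (Fin 2) (Fin 2) R) (r : Fin 2 → R) :
    (intertwiner A r).det =
      A 1 0 * r 1 ^ 2 + (A 0 0 - A 1 1) * r 0 * r 1 - A 0 1 * r 0 ^ 2 := by
  rw [det_fin_two]
  simp only [intertwiner, cons_val_zero, cons_val_one, Pi.neg_apply, vecMul, dotProduct,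
    Fin.sum_univ_two]
  ring

theorem exists_det_intertwiner_ne_zero {F : Type*} [Field F] (h2 : (2 : F) ≠ 0)
    {A : Matrix (Fin 2) (Fin 2) F} (hA : A * A = -1) (hdet : A.det = 1) :
    ∃ r, (intertwiner A r).det ≠ 0 := by
  by_contra! h
  have hb : A 0 1 = 0 := by simpa [det_intertwiner] using h ![1, 0]
  have hc : A 1 0 = 0 := by simpa [det_intertwiner] using h ![0, 1]
  have had : A 0 0 - A 1 1 = 0 := by simpa [det_intertwiner, hb, hc] using h ![1, 1]
  have ha : A 0 0 * A 0 0 + A 0 1 * A 1 0 = -1 := by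
    simpa [mul_apply, Fin.sum_univ_two] using congrFun (congrFun hA 0) 0
  rw [det_fin_two, hb, hc] at hdet
  rw [hb] at ha
  -- `A = a • 1` with `a ^ 2 = det A = 1`, against `a ^ 2 = -1`
  exact h2 (by linear_combination ha - hdet - A 0 0 * had)

end Matrix

namespace Matrix.SpecialLinearGroup

theorem mem_center_of_coe_eq_smul_one {n : Type*} [Fintype n] [DecidableEq n]
    {R : Type*} [CommRing R] {A : SpecialLinearGroup n R} {c : R} (hA : A.1 = c • 1) :
    A ∈ Subgroup.center (SpecialLinearGroup n R) :=
  Subgroup.mem_center_iff.mpr fun g ↦ Subtype.ext <| by simp [hA]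

variable {F : Type*} [Field F]

theorem mem_center_of_coe_mul_self_eq_one (h2 : (2 : F) ≠ 0) {A : SL(2, F)}
    (hA : A.1 * A.1 = 1) : A ∈ Subgroup.center SL(2, F) := by
  have htA : A.1.trace • A.1 = (2 : F) • 1 := by
    have := mul_self_fin_two A.1
    rw [hA, det_coe, eq_sub_iff_add_eq] at this
    rw [← this, two_smul, one_smul]
  have ht : A.1.trace ≠ 0 := by
    intro ht
    exact h2 (by simpa [ht] using (congrFun (congrFun htA 0) 0).symm)
  refine mem_center_of_coe_eq_smul_one (c := A.1.trace⁻¹ * 2) ?_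
  rw [mul_smul, ← htA, smul_smul, inv_mul_cancel₀ ht, one_smul]

theorem coe_mul_self_eq_neg_one_of_orderOf_eq_two (h2 : (2 : F) ≠ 0) {A : SL(2, F)}
    (h : orderOf (QuotientGroup.mk A : PSL(2, F)) = 2) : A.1 * A.1 = -1 := by
  obtain ⟨hsq, hne⟩ := orderOf_eq_prime_iff.mp h
  have hcen : A ^ 2 ∈ Subgroup.center SL(2, F) := by
    rwa [← QuotientGroup.eq_one_iff, QuotientGroup.mk_pow]
  obtain ⟨r, hr, hrA⟩ := mem_center_iff.mp hcen
  have hAA : A.1 * A.1 = scalar (Fin 2) r := by rw [hrA, coe_pow, sq]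
  rw [Fintype.card_fin, sq, mul_self_eq_one_iff] at hr
  rcases hr with rfl | rfl
  · rw [map_one] at hAA
    exact absurd ((QuotientGroup.eq_one_iff A).mpr (mem_center_of_coe_mul_self_eq_one h2 hAA))
      hne
  · rwa [map_neg, map_one] at hAA

def quarterTurn (R : Type*) [CommRing R] : SL(2, R) :=
  ⟨Matrix.quarterTurn R, by simp [Matrix.quarterTurn, det_fin_two_of]⟩

theorem isConj_quarterTurn_of_coe_mul_self [Fintype F] (hF : ringChar F ≠ 2) {A : SL(2, F)}
    (hA : A.1 * A.1 = -1) : IsConj A (quarterTurn F) := by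
  obtain ⟨r, hr⟩ := exists_det_intertwiner_ne_zero (Ring.two_ne_zero hF) hA A.2
  obtain ⟨x, y, hxy⟩ := FiniteField.exists_sq_add_sq hF (intertwiner A.1 r).det⁻¹
  set M := x • 1 + y • Matrix.quarterTurn F
  have hMJ : Commute M (Matrix.quarterTurn F) :=
    ((Commute.one_left _).smul_left x).add_left ((Commute.refl _).smul_left y)
  have hdet : (M * intertwiner A.1 r).det = 1 := by
    rw [det_mul, det_smul_one_add_smul_quarterTurn, hxy, inv_mul_cancel₀ hr]
  refine isConj_iff.mpr ⟨⟨M * intertwiner A.1 r, hdet⟩, mul_inv_eq_iff_eq_mul.mpr ?_⟩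
  refine Subtype.ext ?_
  change M * intertwiner A.1 r * A.1 = Matrix.quarterTurn F * (M * intertwiner A.1 r)
  rw [mul_assoc, intertwiner_mul hA, ← mul_assoc, hMJ.eq, mul_assoc]

end Matrix.SpecialLinearGroup

theorem Matrix.ProjectiveSpecialLinearGroup.isConj_of_orderOf_eq_two {F : Type*} [Field F]
    [Fintype F] (hF : ringChar F ≠ 2) {x y : PSL(2, F)} (hx : orderOf x = 2)
    (hy : orderOf y = 2) : IsConj x y := by
  suffices h : ∀ z : PSL(2, F), orderOf z = 2 → IsConj z (SpecialLinearGroup.quarterTurn F) from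
    (h x hx).trans (h y hy).symm
  intro z hz
  obtain ⟨A, rfl⟩ := QuotientGroup.mk_surjective z
  exact (QuotientGroup.mk' _).map_isConj <|
    SpecialLinearGroup.isConj_quarterTurn_of_coe_mul_self hF <|
    SpecialLinearGroup.coe_mul_self_eq_neg_one_of_orderOf_eq_two (Ring.two_ne_zero hF) hz

/-- In `PSL(2, 𝔽₇)` any two elements of order 2 are conjugate: there is exactly one
conjugacy class of elements of order 2. -/
theorem psl27_order_two_conjugate (x y : PSL27)
    (hx : orderOf x = 2) (hy : orderOf y = 2) : IsConj x y :=
  have : Fact (Nat.Prime 7) := ⟨Nat.prime_seven⟩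
  Matrix.ProjectiveSpecialLinearGroup.isConj_of_orderOf_eq_two
    (by rw [ZMod.ringChar_zmod_n]; norm_num) hx hy
end

section
/- The group PSL(2, F_7) has no disjoint pair (A_1, A_2) of spherical systems of generators with A_1 of type [2,2,2,2,2,2,2,2] and A_2 of type [2,3,7]. -/
/-!
Both systems contain an element of order `2`, and all involutions of `PSL(2, 𝔽₇)` are
conjugate, so `Σ(A₁) ∩ Σ(A₂)` contains an involution. An involution of `PSL(2, 𝔽₇)` lifts to
`M ∈ SL(2, 𝔽₇)` with `M² = -1` (a lift with `M² = 1` is `±1`, as `-1 ≠ 1`), and such `M` is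
conjugate to `S = [0, -1; 1, 0]` by the matrix with columns `v, Mv` as soon as
`det [v, Mv] = 1`; over `𝔽₇` this binary quadratic form in `v` represents `1`.
-/

/-- `A` is a spherical system of generators of `G` of type `T = [m₁, ..., m_r]`:
the entries of `A` generate `G`, their product is `1`, and the list of orders of the
entries of `A` is a permutation of `T`. -/
def SphericalSystem {G : Type*} [Group G] (A : List G) (T : List ℕ) : Prop :=
  Subgroup.closure {g : G | g ∈ A} = ⊤ ∧ A.prod = 1 ∧ (A.map orderOf).Perm T

/-- The stabilizer set `Σ(A) = ⋃_{h ∈ G} ⋃_{j ∈ ℤ} ⋃ᵢ {h gᵢʲ h⁻¹}` of a tuple `A`. -/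
def SigmaSet {G : Type*} [Group G] (A : List G) : Set G :=
  {x | ∃ h : G, ∃ g ∈ A, ∃ j : ℤ, x = h * g ^ j * h⁻¹}

open Matrix MatrixGroups

section SphericalSystem

variable {G : Type*} [Group G]

lemma mem_sigmaSet_of_isConj {A : List G} {g x : G} (hg : g ∈ A) (hgx : IsConj g x) :
    x ∈ SigmaSet A := by
  obtain ⟨c, rfl⟩ := isConj_iff.mp hgx
  exact ⟨c, g, hg, 1, by rw [zpow_one]⟩

lemma SphericalSystem.exists_mem_orderOf_eq {A : List G} {T : List ℕ}
    (hA : SphericalSystem A T) {m : ℕ} (hm : m ∈ T) : ∃ g ∈ A, orderOf g = m :=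
  List.mem_map.mp (hA.2.2.mem_iff.mpr hm)

lemma sigmaSet_inter_sigmaSet_ne_singleton_one {A₁ A₂ : List G} {g₁ g₂ : G} (hg₁ : g₁ ∈ A₁)
    (hg₂ : g₂ ∈ A₂) (hconj : IsConj g₁ g₂) (hne : g₂ ≠ 1) :
    SigmaSet A₁ ∩ SigmaSet A₂ ≠ {1} := by
  intro h
  have hmem : g₂ ∈ SigmaSet A₁ ∩ SigmaSet A₂ :=
    ⟨mem_sigmaSet_of_isConj hg₁ hconj, mem_sigmaSet_of_isConj hg₂ (.refl g₂)⟩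
  exact hne (by simpa [h] using hmem)

end SphericalSystem

namespace Matrix.SpecialLinearGroup

variable {R : Type*} [CommRing R]

def S : SL(2, R) := ⟨!![0, -1; 1, 0], by simp [det_fin_two_of]⟩

lemma det_fin_two_entries (M : SL(2, R)) : M 0 0 * M 1 1 - M 0 1 * M 1 0 = 1 := by
  rw [← det_fin_two, det_coe]

lemma coe_mul_self_fin_two (M : SL(2, R)) :
    ((M * M : SL(2, R)) : Matrix (Fin 2) (Fin 2) R) =
      trace (M : Matrix (Fin 2) (Fin 2) R) • (M : Matrix (Fin 2) (Fin 2) R) - 1 := by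
  have hdet := det_fin_two_entries M
  ext i j
  fin_cases i <;> fin_cases j <;>
    simp only [Fin.zero_eta, Fin.mk_one, Fin.isValue, coe_mul, mul_apply, Fin.sum_univ_two,
      trace_fin_two, sub_apply, smul_apply, smul_eq_mul, one_apply_eq, ne_eq, zero_ne_one,
      one_ne_zero, not_false_eq_true, one_apply_ne, sub_zero] <;>
    first | linear_combination -hdet | ring1

lemma trace_eq_zero_of_mul_self_eq_neg_one {M : SL(2, R)} (hM : M * M = -1) :
    trace (M : Matrix (Fin 2) (Fin 2) R) = 0 := by
  set t := trace (M : Matrix (Fin 2) (Fin 2) R)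
  have htM : t • (M : Matrix (Fin 2) (Fin 2) R) = 0 := by
    have := coe_mul_self_fin_two M
    rwa [hM, coe_neg, coe_one, eq_sub_iff_add_eq, neg_add_cancel, eq_comm] at this
  calc t = (t • (M * M⁻¹ : SL(2, R)) : Matrix (Fin 2) (Fin 2) R) 0 0 := by simp
    _ = 0 := by rw [coe_mul, ← smul_mul_assoc, htM, zero_mul, zero_apply]

lemma isConj_S_of_mul_self_eq_neg_one {M : SL(2, R)} (hM : M * M = -1) {v : Fin 2 → R}
    (hv : v 0 * ((M : Matrix (Fin 2) (Fin 2) R) *ᵥ v) 1 -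
      v 1 * ((M : Matrix (Fin 2) (Fin 2) R) *ᵥ v) 0 = 1) :
    IsConj S M := by
  set w := (M : Matrix (Fin 2) (Fin 2) R) *ᵥ v with hw
  have hMw : (M : Matrix (Fin 2) (Fin 2) R) *ᵥ w = -v := by
    rw [hw, mulVec_mulVec, ← coe_mul, hM, coe_neg, coe_one, neg_mulVec, one_mulVec]
  let C : SL(2, R) := ⟨!![v 0, w 0; v 1, w 1], by rw [det_fin_two_of]; linear_combination hv⟩
  refine isConj_iff.mpr ⟨C, mul_inv_eq_of_eq_mul (Subtype.ext ?_)⟩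
  rw [coe_mul, coe_mul]
  ext i j
  have hw_i := congrFun hw i
  have hMw_i := congrFun hMw i
  simp only [mulVec, dotProduct, Fin.sum_univ_two] at hw_i hMw_i
  fin_cases i <;> fin_cases j <;>
    simp only [C, S, Fin.zero_eta, Fin.mk_one, Fin.isValue, Pi.neg_apply, mul_apply, of_apply,
      cons_val', cons_val_fin_one, cons_val_zero, cons_val_one, Fin.sum_univ_two, mul_zero, mul_one,
      mul_neg, zero_add, add_zero] at hw_i hMw_i ⊢
  exacts [hw_i, hMw_i.symm, hw_i, hMw_i.symm]

variable [IsDomain R]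

lemma mem_center_fin_two_iff {M : SL(2, R)} :
    M ∈ Subgroup.center SL(2, R) ↔ M = 1 ∨ M = -1 := by
  refine ⟨fun hM ↦ ?_, ?_⟩
  · obtain ⟨r, hr, hrM⟩ := mem_center_iff.mp hM
    rcases sq_eq_one_iff.mp (show r ^ 2 = 1 from hr) with rfl | rfl
    · exact .inl <| Subtype.ext <| by rw [coe_one, ← hrM, map_one]
    · exact .inr <| Subtype.ext <| by rw [coe_neg, coe_one, ← hrM, map_neg, map_one]
  · rintro (rfl | rfl)
    · exact Subgroup.one_mem _
    · exact Subgroup.mem_center_iff.mpr fun g ↦ by rw [mul_neg_one, neg_one_mul]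

lemma eq_one_or_eq_neg_one_of_mul_self_eq_one (hR : ringChar R ≠ 2) {M : SL(2, R)}
    (hM : M * M = 1) : M = 1 ∨ M = -1 := by
  have hinv (i j : Fin 2) := congrArg (fun N : SL(2, R) ↦ N i j)
    ((inv_eq_of_mul_eq_one_right hM).symm.trans (SL2_inv_expl M))
  have h01 : M 0 1 = 0 :=
    (Ring.eq_self_iff_eq_zero_of_char_ne_two hR).mp (by simpa using (hinv 0 1).symm)
  have h10 : M 1 0 = 0 :=
    (Ring.eq_self_iff_eq_zero_of_char_ne_two hR).mp (by simpa using (hinv 1 0).symm)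
  have h11 : M 1 1 = M 0 0 := by simpa using (hinv 0 0).symm
  have h00 : M 0 0 * M 0 0 = 1 := by simpa [h01, h11] using det_fin_two_entries M
  rcases mul_self_eq_one_iff.mp h00 with h | h
  · left; ext i j; fin_cases i <;> fin_cases j <;> simp [h01, h10, h11, h]
  · right; ext i j; fin_cases i <;> fin_cases j <;> simp [h01, h10, h11, h]

lemma exists_det_vec_mulVec_eq_one_of_mul_self_eq_neg_one {M : SL(2, ZMod 7)}
    (hM : M * M = -1) : ∃ v : Fin 2 → ZMod 7,
      v 0 * ((M : Matrix (Fin 2) (Fin 2) (ZMod 7)) *ᵥ v) 1 -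
        v 1 * ((M : Matrix (Fin 2) (Fin 2) (ZMod 7)) *ᵥ v) 0 = 1 := by
  -- `det [v, Mv]` for `M = [a, b; c, -a]`, whose determinant is `1` iff `a * a + b * c = -1`
  have hrep : ∀ a b c : ZMod 7, a * a + b * c = -1 →
      ∃ x y : ZMod 7, x * (c * x - a * y) - y * (a * x + b * y) = 1 := by decide
  have htr := trace_eq_zero_of_mul_self_eq_neg_one hM
  rw [trace_fin_two] at htr
  obtain ⟨x, y, hxy⟩ := hrep (M 0 0) (M 0 1) (M 1 0)
    (by linear_combination -(det_fin_two_entries M) + M 0 0 * htr)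
  refine ⟨![x, y], ?_⟩
  simp only [mulVec, dotProduct, Fin.sum_univ_two, Fin.isValue, cons_val_zero, cons_val_one,
    cons_val_fin_one]
  linear_combination hxy + x * y * htr

lemma isConj_of_mul_self_eq_neg_one {M N : SL(2, ZMod 7)} (hM : M * M = -1) (hN : N * N = -1) :
    IsConj M N := by
  obtain ⟨v, hv⟩ := exists_det_vec_mulVec_eq_one_of_mul_self_eq_neg_one hM
  obtain ⟨w, hw⟩ := exists_det_vec_mulVec_eq_one_of_mul_self_eq_neg_one hN
  exact (isConj_S_of_mul_self_eq_neg_one hM hv).symm.trans (isConj_S_of_mul_self_eq_neg_one hN hw)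

end Matrix.SpecialLinearGroup

namespace Matrix.ProjectiveSpecialLinearGroup

lemma mul_self_eq_neg_one_of_orderOf_eq_two {R : Type*} [CommRing R] [IsDomain R]
    (hR : ringChar R ≠ 2) {M : SL(2, R)} (hM : orderOf (M : PSL(2, R)) = 2) : M * M = -1 := by
  have hsq := pow_orderOf_eq_one (M : PSL(2, R))
  rw [hM, sq, ← QuotientGroup.mk_mul] at hsq
  have hcen := (QuotientGroup.eq_one_iff _).mp hsq
  refine (SpecialLinearGroup.mem_center_fin_two_iff.mp hcen).resolve_left fun hM1 ↦ ?_
  have hM_one : (M : PSL(2, R)) = 1 := (QuotientGroup.eq_one_iff _).mpr <|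
    SpecialLinearGroup.mem_center_fin_two_iff.mpr <|
      SpecialLinearGroup.eq_one_or_eq_neg_one_of_mul_self_eq_one hR hM1
  simp [hM_one] at hM

lemma isConj_of_orderOf_eq_two_s16 {x y : PSL(2, ZMod 7)}
    (hx : orderOf x = 2) (hy : orderOf y = 2) : IsConj x y := by
  obtain ⟨M, rfl⟩ := QuotientGroup.mk_surjective x
  obtain ⟨N, rfl⟩ := QuotientGroup.mk_surjective y
  have : Fact (Nat.Prime 7) := ⟨by norm_num⟩
  have h7 : ringChar (ZMod 7) ≠ 2 := by rw [ZMod.ringChar_zmod_n]; decide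
  exact (QuotientGroup.mk' _).map_isConj <| SpecialLinearGroup.isConj_of_mul_self_eq_neg_one
    (mul_self_eq_neg_one_of_orderOf_eq_two h7 hx) (mul_self_eq_neg_one_of_orderOf_eq_two h7 hy)

end Matrix.ProjectiveSpecialLinearGroup

/-- `PSL(2, 𝔽₇)` has no disjoint pair of spherical systems of generators of types
`[2,2,2,2,2,2,2,2]` and `[2,3,7]`. -/
theorem psl27_no_disjoint_pair_2e8_237 :
    ¬ ∃ A₁ A₂ : List PSL27,
      SphericalSystem A₁ [2, 2, 2, 2, 2, 2, 2, 2] ∧ SphericalSystem A₂ [2, 3, 7] ∧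
        SigmaSet A₁ ∩ SigmaSet A₂ = {1} := by
  rintro ⟨A₁, A₂, hA₁, hA₂, hdisj⟩
  obtain ⟨g₁, hg₁, hord₁⟩ := hA₁.exists_mem_orderOf_eq (m := 2) (by simp)
  obtain ⟨g₂, hg₂, hord₂⟩ := hA₂.exists_mem_orderOf_eq (m := 2) (by simp)
  have hg₂_ne_one : g₂ ≠ 1 := by
    rintro rfl
    simp at hord₂
  exact sigmaSet_inter_sigmaSet_ne_singleton_one hg₁ hg₂
    (ProjectiveSpecialLinearGroup.isConj_of_orderOf_eq_two_s16 hord₁ hord₂) hg₂_ne_one hdisj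
end

section
/- The group S_4 × ℤ/2ℤ (the direct product of the symmetric group on 4 letters with the cyclic group of order 2) admits a disjoint pair (A_1, A_2) of spherical systems of generators with A_1 of type [2,2,2,2,2,2,2,2] and A_2 of type [2,4,6]. -/
/-!
The involutions of `S₄ × C₂` with both coordinates nontrivial form a union of conjugacy classes.
Writing `z` for the generator of `C₂`, the first system consists of elements `(σ, z)` with `σ` a
transposition or a double transposition, so every nontrivial element of its stabilizer set is such
an involution. The second system is `((0 3), 1)`, `(ρ, z)`, `(ρ⁻¹ (0 3), z)` with `ρ = (0 1 2 3)`
and `ρ⁻¹ (0 3)` a 3-cycle; a power of one of these has trivial `C₂`-coordinate or is of the form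
`(ρ^±1, z)`, `(3-cycle, z)` or `(1, z)`, so it is never such an involution.
-/

section SigmaSet

variable {G : Type*} [Group G]

theorem one_mem_sigmaSet {A : List G} (hA : A ≠ []) : (1 : G) ∈ SigmaSet A := by
  obtain ⟨g, hg⟩ := List.exists_mem_of_ne_nil A hA
  exact ⟨1, g, hg, 0, by simp⟩

theorem sigmaSet_inter_eq_one_of_separating {A₁ A₂ : List G} (hA₁ : A₁ ≠ []) (hA₂ : A₂ ≠ [])
    (S : Set G) (hS : ∀ h : G, ∀ x ∈ S, h * x * h⁻¹ ∈ S)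
    (h₁ : ∀ g ∈ A₁, ∀ j : ℤ, g ^ j = 1 ∨ g ^ j ∈ S) (h₂ : ∀ g ∈ A₂, ∀ j : ℤ, g ^ j ∉ S) :
    SigmaSet A₁ ∩ SigmaSet A₂ = {1} := by
  refine Set.Subset.antisymm ?_ (Set.singleton_subset_iff.2 ⟨one_mem_sigmaSet hA₁,
    one_mem_sigmaSet hA₂⟩)
  rintro x ⟨⟨h, g, hg, j, rfl⟩, ⟨h', g', hg', j', hx⟩⟩
  rcases h₁ g hg j with hgj | hgj
  · simp [hgj]
  · refine absurd ?_ (h₂ g' hg' j')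
    simpa [hx, mul_assoc] using hS h'⁻¹ _ (hS h _ hgj)

end SigmaSet

theorem forall_zpow_of_forall_pow_lt {G : Type*} [Group G] {g : G} {n : ℕ} (hn : 0 < n)
    (hgn : g ^ n = 1) {P : G → Prop} (hP : ∀ k < n, P (g ^ k)) (j : ℤ) : P (g ^ j) := by
  have hj : 0 ≤ j % (n : ℤ) := Int.emod_nonneg j (by omega)
  have hjn : j % (n : ℤ) < n := Int.emod_lt_of_pos j (by omega)
  rw [zpow_eq_zpow_emod' j hgn, ← Int.toNat_of_nonneg hj, zpow_natCast]
  exact hP _ (by omega)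

theorem Subgroup.eq_top_of_forall_mem_of_closure_eq_top {H K : Type*} [Group H] [Group K]
    {L : Subgroup (H × K)} {s : Set H} {t : Set K} (hs : Subgroup.closure s = ⊤)
    (ht : Subgroup.closure t = ⊤) (hsL : ∀ x ∈ s, (x, (1 : K)) ∈ L)
    (htL : ∀ y ∈ t, ((1 : H), y) ∈ L) : L = ⊤ := by
  have hH : ⊤ ≤ L.comap (MonoidHom.inl H K) := hs ▸ (Subgroup.closure_le _).2 hsL
  have hK : ⊤ ≤ L.comap (MonoidHom.inr H K) := ht ▸ (Subgroup.closure_le _).2 htL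
  refine eq_top_iff.2 fun ⟨x, y⟩ _ => ?_
  simpa using L.mul_mem (hH (Subgroup.mem_top x)) (hK (Subgroup.mem_top y))

def offAxisInvolutions (H K : Type*) [Group H] [Group K] : Set (H × K) :=
  {x | x ^ 2 = 1 ∧ x.1 ≠ 1 ∧ x.2 ≠ 1}

instance {H K : Type*} [Group H] [Group K] [DecidableEq H] [DecidableEq K] :
    DecidablePred (· ∈ offAxisInvolutions H K) :=
  fun x => inferInstanceAs (Decidable (x ^ 2 = 1 ∧ x.1 ≠ 1 ∧ x.2 ≠ 1))

theorem conj_mem_offAxisInvolutions {H K : Type*} [Group H] [Group K] (h : H × K)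
    {x : H × K} (hx : x ∈ offAxisInvolutions H K) : h * x * h⁻¹ ∈ offAxisInvolutions H K := by
  obtain ⟨hx2, hx₁, hx₂⟩ := hx
  exact ⟨by rw [conj_pow, hx2, mul_one, mul_inv_cancel], by simpa using hx₁, by simpa using hx₂⟩

theorem mem_closure_of_list_prod_eq {G : Type*} [Group G] {A l : List G} {x : G}
    (hl : ∀ g ∈ l, g ∈ A) (hx : l.prod = x) : x ∈ Subgroup.closure {g | g ∈ A} :=
  hx ▸ list_prod_mem fun g hg => Subgroup.subset_closure (hl g hg)

namespace S4xC2

abbrev G := Equiv.Perm (Fin 4) × Multiplicative (ZMod 2)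

def z : Multiplicative (ZMod 2) := Multiplicative.ofAdd 1

def ρ : Equiv.Perm (Fin 4) := finRotate 4

def p : G := (Equiv.swap 0 1, z)
def q : G := (Equiv.swap 1 2, z)
def r : G := (Equiv.swap 2 3, z)
def s : G := (Equiv.swap 0 1 * Equiv.swap 2 3, z)

def A₁ : List G := [p, p, q, q, r, r, s, s]

def a : G := (Equiv.swap 0 3, 1)
def b : G := (ρ, z)
def c : G := (ρ⁻¹ * Equiv.swap 0 3, z)

def A₂ : List G := [a, b, c]

theorem eq_top_of_mem {L : Subgroup G} (hρ : (ρ, 1) ∈ L) (hswap : (Equiv.swap 0 1, 1) ∈ L)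
    (hz : (1, z) ∈ L) : L = ⊤ := by
  refine Subgroup.eq_top_of_forall_mem_of_closure_eq_top
    (Equiv.Perm.closure_cycle_adjacent_swap isCycle_finRotate support_finRotate 0)
    ((Subgroup.zpowers_eq_closure z).symm.trans
      (zpowers_eq_top_of_prime_card (p := 2) (by simp) (by decide))) ?_ ?_
  · rintro x (rfl | rfl)
    exacts [hρ, hswap]
  · rintro y rfl
    exact hz

theorem sphericalSystem_A₁ : SphericalSystem A₁ [2, 2, 2, 2, 2, 2, 2, 2] := by
  refine ⟨eq_top_of_mem ?_ ?_ ?_, by decide, ?_⟩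
  · exact mem_closure_of_list_prod_eq (l := [p, q, r, r, p, s]) (by decide) (by decide)
  · exact mem_closure_of_list_prod_eq (l := [p, r, p, s]) (by decide) (by decide)
  · exact mem_closure_of_list_prod_eq (l := [r, p, s]) (by decide) (by decide)
  · have hA₁ : ∀ g ∈ A₁, g ^ 2 = 1 ∧ g ≠ 1 := by decide
    rw [List.map_eq_replicate_iff.2 fun g hg => orderOf_eq_prime (hA₁ g hg).1 (hA₁ g hg).2]
    rfl

theorem sphericalSystem_A₂ : SphericalSystem A₂ [2, 4, 6] := by
  refine ⟨eq_top_of_mem ?_ ?_ ?_, by decide, ?_⟩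
  · exact mem_closure_of_list_prod_eq (l := [b, c, c, c]) (by decide) (by decide)
  · exact mem_closure_of_list_prod_eq (l := [b, a, b, b, b]) (by decide) (by decide)
  · exact mem_closure_of_list_prod_eq (l := [c, c, c]) (by decide) (by decide)
  · have ha : orderOf a = 2 := (orderOf_eq_iff (by norm_num)).2 (by decide)
    have hb : orderOf b = 4 := (orderOf_eq_iff (by norm_num)).2 (by decide)
    have hc : orderOf c = 6 := (orderOf_eq_iff (by norm_num)).2 (by decide)
    simp only [A₂, List.map_cons, List.map_nil, ha, hb, hc, List.Perm.refl]

set_option maxRecDepth 2000 in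
theorem sigmaSet_A₁_inter_sigmaSet_A₂ : SigmaSet A₁ ∩ SigmaSet A₂ = {1} := by
  refine sigmaSet_inter_eq_one_of_separating (List.cons_ne_nil _ _) (List.cons_ne_nil _ _)
    (offAxisInvolutions _ _) (fun h _ => conj_mem_offAxisInvolutions h) ?_ ?_
  · have hA₁ : ∀ g ∈ A₁, g ^ 2 = 1 ∧ ∀ k < 2, g ^ k = 1 ∨ g ^ k ∈ offAxisInvolutions _ _ := by
      decide
    exact fun g hg => forall_zpow_of_forall_pow_lt (P := fun x => x = 1 ∨ x ∈ _) two_pos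
      (hA₁ g hg).1 (hA₁ g hg).2
  · have hA₂ : ∀ g ∈ A₂, g ^ 12 = 1 ∧ ∀ k < 12, g ^ k ∉ offAxisInvolutions _ _ := by
      decide
    exact fun g hg => forall_zpow_of_forall_pow_lt (P := (· ∉ _)) (by norm_num)
      (hA₂ g hg).1 (hA₂ g hg).2

end S4xC2

/-- The group `S₄ × ℤ/2ℤ` admits a disjoint pair of spherical systems of generators of
types `[2,2,2,2,2,2,2,2]` and `[2,4,6]`. -/
theorem s4_x_z2_disjoint_pair_2e8_246 :
    ∃ A₁ A₂ : List (Equiv.Perm (Fin 4) × Multiplicative (ZMod 2)),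
      SphericalSystem A₁ [2, 2, 2, 2, 2, 2, 2, 2] ∧ SphericalSystem A₂ [2, 4, 6] ∧
        SigmaSet A₁ ∩ SigmaSet A₂ = {1} :=
  ⟨S4xC2.A₁, S4xC2.A₂, S4xC2.sphericalSystem_A₁, S4xC2.sphericalSystem_A₂,
    S4xC2.sigmaSet_A₁_inter_sigmaSet_A₂⟩
end

section
/- The alternating group A_5 on 5 letters admits a disjoint pair (A_1, A_2) of spherical systems of generators with A_1 of type [3,3,3,3,3] and A_2 of type [2,5,5]. -/
section SigmaSet

variable {G : Type*} [Group G]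

theorem pow_eq_one_of_mem_sigmaSet {A : List G} {n : ℕ} (hA : ∀ g ∈ A, g ^ n = 1) {x : G}
    (hx : x ∈ SigmaSet A) : x ^ n = 1 := by
  obtain ⟨h, g, hg, j, rfl⟩ := hx
  rw [conj_pow, ← zpow_natCast, ← zpow_mul, mul_comm, zpow_mul, zpow_natCast, hA g hg,
    one_zpow, mul_one, mul_inv_cancel]

theorem sigmaSet_inter_eq_one_of_coprime {A₁ A₂ : List G} {m n : ℕ} (hmn : m.Coprime n)
    (h₁ : ∀ g ∈ A₁, g ^ m = 1) (h₂ : ∀ g ∈ A₂, g ^ n = 1) (hA₁ : A₁ ≠ []) (hA₂ : A₂ ≠ []) :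
    SigmaSet A₁ ∩ SigmaSet A₂ = {1} := by
  refine Set.Subset.antisymm (fun x ⟨hx₁, hx₂⟩ => ?_) ?_
  · have hm := orderOf_dvd_of_pow_eq_one (pow_eq_one_of_mem_sigmaSet h₁ hx₁)
    have hn := orderOf_dvd_of_pow_eq_one (pow_eq_one_of_mem_sigmaSet h₂ hx₂)
    exact orderOf_eq_one_iff.mp (Nat.eq_one_of_dvd_coprimes hmn hm hn)
  · rw [Set.singleton_subset_iff]
    exact ⟨one_mem_sigmaSet hA₁, one_mem_sigmaSet hA₂⟩

end SigmaSet

theorem Subgroup.index_ne_two_of_isSimpleGroup {G : Type*} [Group G] [IsSimpleGroup G]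
    (hG : Nat.card G ≠ 2) (H : Subgroup G) : H.index ≠ 2 := by
  intro hH
  rcases IsSimpleGroup.eq_bot_or_eq_top_of_normal H (Subgroup.normal_of_index_eq_two hH) with
    rfl | rfl
  · exact hG (Subgroup.index_bot (G := G) ▸ hH)
  · exact absurd hH (by simp)

namespace alternatingGroup

theorem nat_card_fin_five : Nat.card (alternatingGroup (Fin 5)) = 60 := by
  rw [nat_card_alternatingGroup, Nat.card_fin]
  rfl

theorem eq_top_of_orderOf_eq_two_three_five (H : Subgroup (alternatingGroup (Fin 5)))
    {a b c : alternatingGroup (Fin 5)} (ha : a ∈ H) (hb : b ∈ H) (hc : c ∈ H)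
    (ha₂ : orderOf a = 2) (hb₃ : orderOf b = 3) (hc₅ : orderOf c = 5) : H = ⊤ := by
  have h₂ := ha₂ ▸ H.orderOf_dvd_natCard ha
  have h₃ := hb₃ ▸ H.orderOf_dvd_natCard hb
  have h₅ := hc₅ ▸ H.orderOf_dvd_natCard hc
  have h₃₀ : 30 ∣ Nat.card H :=
    Nat.Coprime.mul_dvd_of_dvd_of_dvd (by norm_num)
      (Nat.Coprime.mul_dvd_of_dvd_of_dvd (by norm_num) h₂ h₃) h₅
  have hindex : H.index ∣ 2 := by
    rw [← Nat.mul_dvd_mul_iff_right (by norm_num : 0 < 30), mul_comm, show 2 * 30 = 60 from rfl,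
      ← nat_card_fin_five, ← H.card_mul_index]
    exact Nat.mul_dvd_mul_right h₃₀ _
  rcases (Nat.dvd_prime Nat.prime_two).mp hindex with h | h
  · exact Subgroup.index_eq_one.mp h
  · exact absurd h (H.index_ne_two_of_isSimpleGroup (by rw [nat_card_fin_five]; norm_num))

def cycle012 : alternatingGroup (Fin 5) :=
  ⟨Equiv.swap 0 1 * Equiv.swap 1 2, by rw [Equiv.Perm.mem_alternatingGroup]; decide⟩

def cycle234 : alternatingGroup (Fin 5) :=
  ⟨Equiv.swap 2 3 * Equiv.swap 3 4, by rw [Equiv.Perm.mem_alternatingGroup]; decide⟩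

def swap01Swap23 : alternatingGroup (Fin 5) :=
  ⟨Equiv.swap 0 1 * Equiv.swap 2 3, by rw [Equiv.Perm.mem_alternatingGroup]; decide⟩

def cycle02413 : alternatingGroup (Fin 5) :=
  ⟨Equiv.swap 0 2 * Equiv.swap 2 4 * Equiv.swap 4 1 * Equiv.swap 1 3,
    by rw [Equiv.Perm.mem_alternatingGroup]; decide⟩

def threeCycleSystem : List (alternatingGroup (Fin 5)) :=
  [cycle012, cycle012, cycle012, cycle234, cycle234⁻¹]

def twoFiveFiveSystem : List (alternatingGroup (Fin 5)) :=
  [swap01Swap23, cycle02413, (swap01Swap23 * cycle02413)⁻¹]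

theorem sphericalSystem_threeCycleSystem : SphericalSystem threeCycleSystem [3, 3, 3, 3, 3] := by
  have := Fact.mk Nat.prime_five
  have h₀₁₂ : orderOf cycle012 = 3 := orderOf_eq_prime (by decide) (by decide)
  have h₂₃₄ : orderOf cycle234 = 3 := orderOf_eq_prime (by decide) (by decide)
  refine ⟨?_, by decide, by simp [threeCycleSystem, h₀₁₂, h₂₃₄]⟩
  have hx : cycle012 ∈ Subgroup.closure {g | g ∈ threeCycleSystem} :=
    Subgroup.subset_closure (by simp [threeCycleSystem])
  have hy : cycle234 ∈ Subgroup.closure {g | g ∈ threeCycleSystem} :=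
    Subgroup.subset_closure (by simp [threeCycleSystem])
  exact eq_top_of_orderOf_eq_two_three_five _
    (mul_mem (mul_mem (mul_mem hx hy) hx) (inv_mem hy)) hx (mul_mem hx hy)
    (orderOf_eq_prime (by decide) (by decide)) h₀₁₂ (orderOf_eq_prime (by decide) (by decide))

set_option maxRecDepth 10000 in
theorem sphericalSystem_twoFiveFiveSystem : SphericalSystem twoFiveFiveSystem [2, 5, 5] := by
  have := Fact.mk Nat.prime_five
  have ht : orderOf swap01Swap23 = 2 := orderOf_eq_prime (by decide) (by decide)
  have hu : orderOf cycle02413 = 5 := orderOf_eq_prime (by decide) (by decide)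
  have htu : orderOf (swap01Swap23 * cycle02413) = 5 := orderOf_eq_prime (by decide) (by decide)
  refine ⟨?_, by simp [twoFiveFiveSystem], ?_⟩
  · have ht' : swap01Swap23 ∈ Subgroup.closure {g | g ∈ twoFiveFiveSystem} :=
      Subgroup.subset_closure (by simp [twoFiveFiveSystem])
    have hu' : cycle02413 ∈ Subgroup.closure {g | g ∈ twoFiveFiveSystem} :=
      Subgroup.subset_closure (by simp [twoFiveFiveSystem])
    exact eq_top_of_orderOf_eq_two_three_five _ ht' (mul_mem (mul_mem ht' hu') hu') hu' ht
      (orderOf_eq_prime (by decide) (by decide)) hu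
  · simp only [twoFiveFiveSystem, List.map_cons, List.map_nil, orderOf_inv, ht, hu, htu]
    rfl

set_option maxRecDepth 10000 in
theorem sigmaSet_threeCycleSystem_inter_twoFiveFiveSystem :
    SigmaSet threeCycleSystem ∩ SigmaSet twoFiveFiveSystem = {1} :=
  sigmaSet_inter_eq_one_of_coprime (m := 3) (n := 10) (by norm_num) (by decide) (by decide)
    (by simp [threeCycleSystem]) (by simp [twoFiveFiveSystem])

end alternatingGroup

/-- The alternating group `A₅` admits a disjoint pair of spherical systems of generators
of types `[3,3,3,3,3]` and `[2,5,5]`. -/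
theorem a5_disjoint_pair_3e5_255 :
    ∃ A₁ A₂ : List (alternatingGroup (Fin 5)),
      SphericalSystem A₁ [3, 3, 3, 3, 3] ∧ SphericalSystem A₂ [2, 5, 5] ∧
        SigmaSet A₁ ∩ SigmaSet A₂ = {1} :=
  ⟨_, _, alternatingGroup.sphericalSystem_threeCycleSystem,
    alternatingGroup.sphericalSystem_twoFiveFiveSystem,
    alternatingGroup.sigmaSet_threeCycleSystem_inter_twoFiveFiveSystem⟩
end
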